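/- arXiv:2103.03019 — 6 statements merged into one kernel-verified Lean document; each statement's English description precedes it below -/
import Mathlib

section
/- If k = p^n where p is prime and n is a positive integer, and ξ, t are nonnegative integers with T_ξ = k·T_t, then ξ ≡ 0 (mod k) or ξ ≡ −1 (mod k). -/
theorem stmt_3 (p n k ξ t : ℕ) (hp : Nat.Prime p) (hn : 0 < n) (hk : k = p ^ n)
    (h : ξ * (ξ + 1) / 2 = k * (t * (t + 1) / 2)) :
    ξ ≡ 0 [MOD k] ∨ ξ + 1 ≡ 0 [MOD k] := by
  have h2 : ξ * (ξ + 1) = k * (t * (t + 1)) := by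
    have e1 := Nat.div_mul_cancel (Nat.even_mul_succ_self ξ).two_dvd
    have e2 := Nat.div_mul_cancel (Nat.even_mul_succ_self t).two_dvd
    calc ξ * (ξ + 1) = ξ * (ξ + 1) / 2 * 2 := e1.symm
      _ = k * (t * (t + 1) / 2) * 2 := by rw [h]
      _ = k * (t * (t + 1) / 2 * 2) := by ring
      _ = k * (t * (t + 1)) := by rw [e2]
  have hdvd : k ∣ ξ * (ξ + 1) := ⟨t * (t + 1), h2⟩
  have hc : Nat.Coprime ξ (ξ + 1) := by simp [Nat.Coprime]
  have hpp : IsPrimePow k := by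
    rw [hk]; exact hp.prime.isPrimePow.pow hn.ne'
  rcases (Nat.Coprime.isPrimePow_dvd_mul hc hpp).mp hdvd with h | h
  · left; exact (Nat.modEq_zero_iff_dvd).mpr h
  · right; exact (Nat.modEq_zero_iff_dvd).mpr h
end

section
/- Let s be a positive even integer and k = s² + 1. Then with t₁ = s(s−1) and ξ₁ = (s²+1)(s−1), one has T_{ξ₁} = k·T_{t₁}, and ξ₁ ≡ 0 (mod k). -/
theorem stmt_4 (s : ℕ) (hs : 0 < s) (hse : Even s) (k t₁ ξ₁ : ℕ)
    (hk : k = s ^ 2 + 1) (ht : t₁ = s * (s - 1)) (hξ : ξ₁ = (s ^ 2 + 1) * (s - 1)) :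
    ξ₁ * (ξ₁ + 1) / 2 = k * (t₁ * (t₁ + 1) / 2) ∧ ξ₁ ≡ 0 [MOD k] := by
  obtain ⟨m, rfl⟩ : ∃ m, s = m + 1 := ⟨s - 1, by omega⟩
  simp only [Nat.add_sub_cancel] at ht hξ
  subst hk ht hξ
  constructor
  · have h2 : 2 ∣ (m + 1) * m * ((m + 1) * m + 1) := (Nat.even_mul_succ_self ((m+1)*m)).two_dvd
    obtain ⟨c, hc⟩ := h2
    have h1 : ((m + 1) ^ 2 + 1) * m * (((m + 1) ^ 2 + 1) * m + 1)
        = 2 * (((m + 1) ^ 2 + 1) * c) := by nlinarith [hc]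
    rw [hc, h1]
    simp [Nat.mul_div_cancel_left]
  · exact (Nat.modEq_zero_iff_dvd).2 ⟨m, rfl⟩
end

section
/- Let s be a positive even integer and k = s² + 1. Then with t₂ = s(s+1) and ξ₂ = (s²+1)(s+1) − 1, one has T_{ξ₂} = k·T_{t₂}, and ξ₂ ≡ k−1 (mod k). -/
theorem stmt_5 (s : ℕ) (hs : 0 < s) (hse : Even s) (k t₂ ξ₂ : ℕ)
    (hk : k = s ^ 2 + 1) (ht : t₂ = s * (s + 1)) (hξ : ξ₂ = (s ^ 2 + 1) * (s + 1) - 1) :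
    ξ₂ * (ξ₂ + 1) / 2 = k * (t₂ * (t₂ + 1) / 2) ∧ ξ₂ ≡ k - 1 [MOD k] := by
  have hξ' : ξ₂ = s ^ 3 + s ^ 2 + s := by subst hξ; ring_nf; omega
  subst hk ht hξ'
  constructor
  · have h2 : 2 ∣ s * (s + 1) * (s * (s + 1) + 1) := by
      rcases Nat.even_mul_succ_self s with ⟨m, hm⟩
      exact ⟨m * (s * (s + 1) + 1), by rw [hm]; ring⟩
    rw [← Nat.mul_div_assoc _ h2]
    congr 1
    ring
  · show _ % _ = _ % _
    have h1 : s ^ 3 + s ^ 2 + s = s ^ 2 + s * (s ^ 2 + 1) := by ring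
    rw [h1, Nat.add_mul_mod_self_right]
    simp
end

section
/- Let s be an odd integer with s ≥ 3 and k = s² − 1. Then with t₁ = (s−1)s − 1 and ξ₁ = (s²−1)(s−1) − 1, one has T_{ξ₁} = k·T_{t₁}, and ξ₁ ≡ k−1 (mod k). -/
theorem stmt_6 (s : ℕ) (hs : 3 ≤ s) (hso : Odd s) (k t₁ ξ₁ : ℕ)
    (hk : k = s ^ 2 - 1) (ht : t₁ = (s - 1) * s - 1) (hξ : ξ₁ = (s ^ 2 - 1) * (s - 1) - 1) :
    ξ₁ * (ξ₁ + 1) / 2 = k * (t₁ * (t₁ + 1) / 2) ∧ ξ₁ ≡ k - 1 [MOD k] := by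
  obtain ⟨n, rfl⟩ : ∃ n, s = n + 3 := ⟨s - 3, by omega⟩
  have e0 : n + 3 - 1 = n + 2 := rfl
  have e1 : (n + 3) ^ 2 = n ^ 2 + 6 * n + 9 := by ring
  have e2 : (n + 2) * (n + 3) = n ^ 2 + 5 * n + 6 := by ring
  have e3 : (n ^ 2 + 6 * n + 8) * (n + 2) = n ^ 3 + 8 * n ^ 2 + 20 * n + 16 := by ring
  have hk' : k = n ^ 2 + 6 * n + 8 := by rw [hk, e1]; omega
  have ht' : t₁ = n ^ 2 + 5 * n + 5 := by rw [ht, e0, e2]; omega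
  have hξ' : ξ₁ = n ^ 3 + 8 * n ^ 2 + 20 * n + 15 := by
    rw [hξ, e1, show n ^ 2 + 6 * n + 9 - 1 = n ^ 2 + 6 * n + 8 by omega, e0, e3]; omega
  subst hk' ht' hξ'
  constructor
  · have hev : 2 ∣ (n ^ 2 + 5 * n + 5) * (n ^ 2 + 5 * n + 5 + 1) :=
      (Nat.even_mul_succ_self (n ^ 2 + 5 * n + 5)).two_dvd
    have key : (n ^ 3 + 8 * n ^ 2 + 20 * n + 15) * (n ^ 3 + 8 * n ^ 2 + 20 * n + 15 + 1) =
        (n ^ 2 + 6 * n + 8) * ((n ^ 2 + 5 * n + 5) * (n ^ 2 + 5 * n + 5 + 1)) := by ring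
    rw [key, Nat.mul_div_assoc _ hev]
  · show _ % _ = _ % _
    have h1 : n ^ 3 + 8 * n ^ 2 + 20 * n + 15 =
        (n ^ 2 + 6 * n + 8) * (n + 1) + (n ^ 2 + 6 * n + 8 - 1) := by ring_nf; omega
    rw [h1, Nat.mul_add_mod]
end

section
/- Let s be an odd integer with s ≥ 3 and k = s² − 2. Then with t₁ = (s−2)(s+1)/2 and ξ₁ = (s²−2)(s−1)/2 − 1, one has T_{ξ₁} = k·T_{t₁}, and ξ₁ ≡ k−1 (mod k). -/
theorem stmt_8 (s : ℕ) (hs : 3 ≤ s) (hso : Odd s) (k t₁ ξ₁ : ℕ)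
    (hk : k = s ^ 2 - 2) (ht : t₁ = (s - 2) * (s + 1) / 2)
    (hξ : ξ₁ = (s ^ 2 - 2) * (s - 1) / 2 - 1) :
    ξ₁ * (ξ₁ + 1) / 2 = k * (t₁ * (t₁ + 1) / 2) ∧ ξ₁ ≡ k - 1 [MOD k] := by
  obtain ⟨n, hn⟩ := hso
  obtain ⟨p, hp⟩ : ∃ p, n = p + 1 := ⟨n - 1, by omega⟩
  have hsp : s = 2 * p + 3 := by omega
  subst hsp
  have hs2 : (2 * p + 3) ^ 2 = 4 * p ^ 2 + 12 * p + 9 := by ring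
  have hk' : k = 4 * p ^ 2 + 12 * p + 7 := by omega
  have h1 : (2 * p + 3 - 2) * (2 * p + 3 + 1) = 2 * (2 * p ^ 2 + 5 * p + 2) := by
    have e1 : 2 * p + 3 - 2 = 2 * p + 1 := by omega
    rw [e1]; ring
  have ht' : t₁ = 2 * p ^ 2 + 5 * p + 2 := by omega
  have h2 : ((2 * p + 3) ^ 2 - 2) * (2 * p + 3 - 1) = 2 * (4 * p ^ 3 + 16 * p ^ 2 + 19 * p + 7) := by
    have e1 : (2 * p + 3) ^ 2 - 2 = 4 * p ^ 2 + 12 * p + 7 := by omega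
    have e2 : 2 * p + 3 - 1 = 2 * p + 2 := by omega
    rw [e1, e2]; ring
  have hξ' : ξ₁ = 4 * p ^ 3 + 16 * p ^ 2 + 19 * p + 6 := by omega
  constructor
  · have key : ξ₁ * (ξ₁ + 1) = k * (t₁ * (t₁ + 1)) := by
      rw [hξ', ht', hk']; ring
    rw [key, Nat.mul_div_assoc k (Nat.even_mul_succ_self t₁).two_dvd]
  · have hmod : ξ₁ = (k - 1) + k * p := by
      have : k * p = 4 * p ^ 3 + 12 * p ^ 2 + 7 * p := by rw [hk']; ring
      omega
    show ξ₁ % k = (k - 1) % k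
    rw [hmod, Nat.add_mul_mod_self_left]
end

section
/- Let s be an odd integer with s ≥ 3 and k = s² − 2. Then with t₂ = s(s+1)/2 − 1 and ξ₂ = (s²−2)(s+1)/2, one has T_{ξ₂} = k·T_{t₂}, and ξ₂ ≡ 0 (mod k). -/
theorem stmt_9 (s : ℕ) (hs : 3 ≤ s) (hso : Odd s) (k t₂ ξ₂ : ℕ)
    (hk : k = s ^ 2 - 2) (ht : t₂ = s * (s + 1) / 2 - 1)
    (hξ : ξ₂ = (s ^ 2 - 2) * (s + 1) / 2) :
    ξ₂ * (ξ₂ + 1) / 2 = k * (t₂ * (t₂ + 1) / 2) ∧ ξ₂ ≡ 0 [MOD k] := by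
  obtain ⟨m, hm⟩ := hso
  have hm1 : 1 ≤ m := by omega
  -- t₂ = 2m² + 3m
  have hdiv1 : s * (s + 1) / 2 = (2 * m + 1) * (m + 1) := by
    have h : s * (s + 1) = 2 * ((2 * m + 1) * (m + 1)) := by subst hm; ring
    rw [h, Nat.mul_div_cancel_left _ (by norm_num)]
  have ht2 : t₂ = 2 * m ^ 2 + 3 * m := by
    have h1 : (2 * m + 1) * (m + 1) = 2 * m ^ 2 + 3 * m + 1 := by ring
    rw [ht, hdiv1]; omega
  -- k = 4m² + 4m - 1
  have hk2 : k = 4 * m ^ 2 + 4 * m - 1 ∧ k + 1 = 4 * m ^ 2 + 4 * m := by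
    have h1 : s ^ 2 = 4 * m ^ 2 + 4 * m + 1 := by subst hm; ring
    have h2 : 1 ≤ m ^ 2 := Nat.one_le_pow _ _ (by omega)
    constructor <;> omega
  -- ξ₂ = k * (m+1)
  have hξ2 : ξ₂ = k * (m + 1) := by
    have h : (s ^ 2 - 2) * (s + 1) = 2 * (k * (m + 1)) := by
      rw [← hk, hm]; ring
    rw [hξ, h, Nat.mul_div_cancel_left _ (by norm_num)]
  constructor
  · -- key product identity
    have key : ξ₂ * (ξ₂ + 1) = k * (t₂ * (t₂ + 1)) := by
      have h1 : ξ₂ + 1 = m * (2 * m + 1) * (2 * m + 3) := by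
        have := hk2.2
        rw [hξ2]
        nlinarith [hk2.1, hk2.2]
      calc ξ₂ * (ξ₂ + 1) = k * (m + 1) * (m * (2 * m + 1) * (2 * m + 3)) := by
            rw [h1, hξ2]
        _ = k * (t₂ * (t₂ + 1)) := by rw [ht2]; ring
    have heven : 2 ∣ t₂ * (t₂ + 1) := (Nat.even_mul_succ_self t₂).two_dvd
    obtain ⟨c, hc⟩ := heven
    have hξeven : ξ₂ * (ξ₂ + 1) = 2 * (k * c) := by rw [key, hc]; ring
    rw [hξeven, hc, Nat.mul_div_cancel_left _ (by norm_num),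
      Nat.mul_div_cancel_left _ (by norm_num)]
  · rw [hξ2]
    exact (Nat.modEq_zero_iff_dvd).mpr ⟨m + 1, rfl⟩
end
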